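/- Let 1 < α ≤ 2 and m ∈ ℝ. Then D^{α−1}[t^{α−2} E_{α,α−1}(m t^α)](t) = m t^{α−1} E_{α,α}(m t^α) for t > 0, where D^{α−1} is the Riemann-Liouville derivative of order α−1; in particular, this fractional derivative tends to 0 as t → 0+. -/

import Mathlib

noncomputable def mlE (α β x : ℝ) : ℝ :=
  ∑' k : ℕ, x ^ k / Real.Gamma (α * k + β)

/-- Riemann-Liouville fractional derivative of order `γ ∈ (0,1]`
(ordinary derivative for `γ = 1`). -/
noncomputable def rlD (γ : ℝ) (u : ℝ → ℝ) (t : ℝ) : ℝ :=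
  if γ = 1 then deriv u t
  else deriv (fun τ : ℝ =>
    (1 / Real.Gamma (1 - γ)) * ∫ s in (0:ℝ)..τ, (τ - s) ^ (-γ) * u s) t

/-!
Integrating the Mittag-Leffler series term by term against the Beta integral
`∫₀^τ s^(p-1) (τ-s)^(q-1) ds = Γ(p)Γ(q)/Γ(p+q) · τ^(p+q-1)` gives, for `β, q > 0`,
`∫₀^τ (τ-s)^(q-1) s^(β-1) E_{α,β}(m s^α) ds = Γ(q) τ^(β+q-1) E_{α,β+q}(m τ^α)`.
With `β = α - 1` and `q = 2 - α` the right-hand side is `Γ(2-α) E_{α,1}(m τ^α)`, so for `α < 2`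
(and trivially for `α = 2`) the Riemann-Liouville derivative is the ordinary derivative of
`E_{α,1}(m t^α)`. Since `Γ(αk + α + 1) = (αk + α) Γ(αk + α)`, differentiating `E_{α,1}` termwise
gives `E_{α,α}/α`, whence the formula; the limit follows from `t^(α-1) → 0`.
-/

open Real Set Filter MeasureTheory
open scoped Nat

lemma Real.factorial_le_Gamma {n : ℕ} {x : ℝ} (hn : 1 ≤ n) (hx : n + 1 ≤ x) :
    (n ! : ℝ) ≤ Gamma x := by
  have h2 : (2 : ℝ) ≤ n + 1 := by
    have : (1 : ℝ) ≤ n := by exact_mod_cast hn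
    linarith
  rw [← Gamma_nat_eq_factorial]
  exact Gamma_strictMonoOn_Ici.monotoneOn h2 (h2.trans hx) hx

lemma summable_pow_div_Gamma {a : ℝ} (ha : 1 < a) (b x : ℝ) :
    Summable fun k : ℕ => x ^ k / Gamma (a * k + b) := by
  refine (Real.summable_pow_div_factorial |x|).of_norm_bounded_eventually_nat ?_
  obtain ⟨N, hN⟩ := exists_nat_ge ((1 - b) / (a - 1))
  filter_upwards [eventually_ge_atTop (max N 1)] with k hk
  have hk1 : 1 ≤ k := le_of_max_le_right hk
  have hkN : (1 - b) / (a - 1) ≤ k := hN.trans (by exact_mod_cast le_of_max_le_left hk)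
  have hGamma : (k ! : ℝ) ≤ Gamma (a * k + b) := by
    refine Real.factorial_le_Gamma hk1 ?_
    rw [div_le_iff₀ (by linarith)] at hkN
    linarith
  rw [norm_div, norm_pow, Real.norm_eq_abs,
    Real.norm_of_nonneg ((Nat.cast_nonneg _).trans hGamma)]
  gcongr

lemma abs_nat_mul_pow_pred_le_two_mul_pow {R y : ℝ} (hR : 1 ≤ R) (hy : |y| ≤ R) (k : ℕ) :
    |k * y ^ (k - 1)| ≤ (2 * R) ^ k := by
  rw [abs_mul, Nat.abs_cast, abs_pow, mul_pow]
  have hk : (k : ℝ) ≤ 2 ^ k := by exact_mod_cast (Nat.lt_two_pow_self).le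
  have hpow : |y| ^ (k - 1) ≤ R ^ k :=
    (pow_le_pow_left₀ (abs_nonneg y) hy _).trans (pow_le_pow_right₀ hR (Nat.sub_le k 1))
  gcongr

lemma hasDerivAt_mlE {a : ℝ} (ha : 1 < a) (b x : ℝ) :
    HasDerivAt (mlE a b) (∑' k : ℕ, k * x ^ (k - 1) / Gamma (a * k + b)) x := by
  set R := |x| + 1
  have hR : 1 ≤ R := by simp [R]
  have hxR : x ∈ Ioo (-R) R := by
    simp only [mem_Ioo, R]; constructor <;> linarith [neg_abs_le x, le_abs_self x]
  refine hasDerivAt_tsum_of_isPreconnected (t := Ioo (-R) R) (y₀ := 0)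
    (u := fun k : ℕ => |(2 * R) ^ k / Gamma (a * k + b)|)
    (summable_pow_div_Gamma ha b (2 * R)).abs isOpen_Ioo (convex_Ioo _ _).isPreconnected
    (fun k y _ => (hasDerivAt_pow k y).div_const _) (fun k y hy => ?_)
    ⟨by linarith, by linarith⟩ (summable_pow_div_Gamma ha b 0) hxR
  rw [Real.norm_eq_abs, abs_div, abs_div, abs_of_nonneg (by positivity : (0:ℝ) ≤ (2 * R) ^ k)]
  gcongr
  exact abs_nat_mul_pow_pred_le_two_mul_pow hR (abs_le.2 ⟨hy.1.le, hy.2.le⟩) k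

lemma continuous_mlE {a : ℝ} (ha : 1 < a) (b : ℝ) : Continuous (mlE a b) :=
  continuous_iff_continuousAt.2 fun x => (hasDerivAt_mlE ha b x).continuousAt

lemma hasDerivAt_mlE_one {a : ℝ} (ha : 1 < a) (x : ℝ) :
    HasDerivAt (mlE a 1) (a⁻¹ * mlE a a x) x := by
  have hshift : (fun j : ℕ => ((j + 1 : ℕ) : ℝ) * x ^ (j + 1 - 1) / Gamma (a * (j + 1 : ℕ) + 1))
      = fun j : ℕ => a⁻¹ * (x ^ j / Gamma (a * j + a)) := by
    funext j
    have hpos : 0 < a * j + a := by positivity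
    rw [Nat.cast_succ, show a * (j + 1) + 1 = (a * j + a) + 1 by ring, Gamma_add_one hpos.ne',
      Nat.add_sub_cancel]
    field_simp
  convert hasDerivAt_mlE ha 1 x using 1
  rw [tsum_eq_zero_add' (hshift ▸ (summable_pow_div_Gamma ha a x).mul_left a⁻¹), hshift,
    tsum_mul_left, mlE]
  simp

lemma hasDerivAt_mlE_one_comp_rpow {a : ℝ} (ha : 1 < a) (m : ℝ) {t : ℝ} (ht : 0 < t) :
    HasDerivAt (fun τ => mlE a 1 (m * τ ^ a)) (m * t ^ (a - 1) * mlE a a (m * t ^ a)) t := by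
  have h := (hasDerivAt_mlE_one ha (m * t ^ a)).comp t
    ((hasDerivAt_rpow_const (p := a) (Or.inl ht.ne')).const_mul m)
  exact h.congr_deriv (by field_simp)

lemma integral_rpow_mul_one_sub_rpow {p q : ℝ} (hp : 0 < p) (hq : 0 < q) :
    ∫ x in (0 : ℝ)..1, x ^ (p - 1) * (1 - x) ^ (q - 1) = Gamma p * Gamma q / Gamma (p + q) := by
  have h := Complex.Gamma_mul_Gamma_eq_betaIntegral
    (s := (p : ℂ)) (t := (q : ℂ)) (by simpa using hp) (by simpa using hq)
  have hB : Complex.betaIntegral p q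
      = ((∫ x in (0 : ℝ)..1, x ^ (p - 1) * (1 - x) ^ (q - 1) : ℝ) : ℂ) := by
    rw [Complex.betaIntegral, ← intervalIntegral.integral_ofReal]
    refine intervalIntegral.integral_congr fun x hx => ?_
    rw [uIcc_of_le zero_le_one] at hx
    simp only [Complex.ofReal_mul, Complex.ofReal_cpow hx.1,
      Complex.ofReal_cpow (sub_nonneg.2 hx.2)]
    push_cast
    ring
  rw [hB, ← Complex.ofReal_add, Complex.Gamma_ofReal, Complex.Gamma_ofReal, Complex.Gamma_ofReal,
    ← Complex.ofReal_mul, ← Complex.ofReal_mul] at h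
  have hΓ : Gamma (p + q) ≠ 0 := (Gamma_pos_of_pos (by linarith)).ne'
  rw [eq_div_iff hΓ, Complex.ofReal_inj.mp h, mul_comm]

lemma intervalIntegrable_rpow_mul_sub_rpow {τ p q : ℝ} (hτ : 0 < τ) (hp : 0 < p) (hq : 0 < q) :
    IntervalIntegrable (fun s => s ^ (p - 1) * (τ - s) ^ (q - 1)) volume 0 τ := by
  have left : ∀ p' q' : ℝ, 0 < p' →
      IntervalIntegrable (fun s => s ^ (p' - 1) * (τ - s) ^ (q' - 1)) volume 0 (τ / 2) := by
    intro p' q' hp'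
    refine (intervalIntegral.intervalIntegrable_rpow' (by linarith)).mul_continuousOn
      (ContinuousOn.rpow_const (by fun_prop) fun x hx => Or.inl ?_)
    rw [uIcc_of_le (by linarith)] at hx
    linarith [hx.2]
  have right := (left q p hq).comp_sub_left τ
  simp only [sub_sub_cancel, sub_zero, show τ - τ / 2 = τ / 2 by ring] at right
  exact (left p q hp).trans (right.symm.congr fun s _ => mul_comm _ _)

lemma integral_rpow_mul_sub_rpow {τ p q : ℝ} (hτ : 0 < τ) (hp : 0 < p) (hq : 0 < q) :
    ∫ s in (0 : ℝ)..τ, s ^ (p - 1) * (τ - s) ^ (q - 1)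
      = Gamma p * Gamma q / Gamma (p + q) * τ ^ (p + q - 1) := by
  have h := intervalIntegral.integral_comp_mul_left
    (fun s => s ^ (p - 1) * (τ - s) ^ (q - 1)) hτ.ne' (a := 0) (b := 1)
  simp only [mul_zero, mul_one] at h
  rw [eq_inv_smul_iff₀ hτ.ne', smul_eq_mul] at h
  rw [← h, ← integral_rpow_mul_one_sub_rpow hp hq, ← intervalIntegral.integral_mul_const,
    ← intervalIntegral.integral_const_mul]
  refine intervalIntegral.integral_congr fun x hx => ?_
  rw [uIcc_of_le zero_le_one] at hx
  rw [show τ - τ * x = τ * (1 - x) by ring, mul_rpow hτ.le hx.1, mul_rpow hτ.le (sub_nonneg.2 hx.2),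
    show p + q - 1 = (p - 1) + (q - 1) + 1 by ring, rpow_add hτ, rpow_add hτ, rpow_one]
  ring

section FractionalIntegral

variable {α β q τ : ℝ}

lemma setIntegral_mlE_term (hα : 0 ≤ α) (hβ : 0 < β) (hq : 0 < q) (hτ : 0 < τ) (μ : ℝ) (k : ℕ) :
    ∫ s in Ioc 0 τ, μ ^ k / Gamma (α * k + β) * (s ^ (α * k + β - 1) * (τ - s) ^ (q - 1))
      = Gamma q * τ ^ (β + q - 1) * ((μ * τ ^ α) ^ k / Gamma (α * k + (β + q))) := by
  have hp : 0 < α * k + β := by positivity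
  rw [integral_const_mul, ← intervalIntegral.integral_of_le hτ.le,
    integral_rpow_mul_sub_rpow hτ hp hq, mul_pow, ← rpow_mul_natCast hτ.le,
    show α * k + β + q - 1 = (β + q - 1) + α * k by ring, rpow_add hτ, ← add_assoc]
  have := (Gamma_pos_of_pos hp).ne'
  field_simp

lemma integral_sub_rpow_mul_rpow_mul_mlE (hα : 1 < α) (hβ : 0 < β) (hq : 0 < q)
    (hτ : 0 < τ) (m : ℝ) :
    ∫ s in (0 : ℝ)..τ, (τ - s) ^ (q - 1) * (s ^ (β - 1) * mlE α β (m * s ^ α))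
      = Gamma q * τ ^ (β + q - 1) * mlE α (β + q) (m * τ ^ α) := by
  set F : ℕ → ℝ → ℝ := fun k s =>
    m ^ k / Gamma (α * k + β) * (s ^ (α * k + β - 1) * (τ - s) ^ (q - 1))
  have hseries : ∀ s ∈ Ioc 0 τ,
      (τ - s) ^ (q - 1) * (s ^ (β - 1) * mlE α β (m * s ^ α)) = ∑' k, F k s := by
    rintro s ⟨hs, -⟩
    rw [mlE, ← tsum_mul_left, ← tsum_mul_left]
    refine tsum_congr fun k => ?_
    simp only [F]
    rw [mul_pow, ← rpow_mul_natCast hs.le, show α * k + β - 1 = (β - 1) + α * k by ring,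
      rpow_add hs]
    ring
  have hint : ∀ k, Integrable (F k) (volume.restrict (Ioc 0 τ)) := fun k =>
    ((intervalIntegrable_iff_integrableOn_Ioc_of_le hτ.le).1
      (intervalIntegrable_rpow_mul_sub_rpow hτ (by positivity) hq)).const_mul _
  have hnorm : ∀ k, ∫ s in Ioc 0 τ, ‖F k s‖
      = Gamma q * τ ^ (β + q - 1) * ((|m| * τ ^ α) ^ k / Gamma (α * k + (β + q))) := by
    intro k
    rw [← setIntegral_mlE_term (by linarith) hβ hq hτ |m| k]
    refine setIntegral_congr_fun measurableSet_Ioc fun s ⟨hs, hsτ⟩ => ?_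
    have hΓ := Gamma_pos_of_pos (by positivity : 0 < α * k + β)
    simp only [F, norm_mul, norm_div, norm_pow, Real.norm_eq_abs, abs_of_pos hΓ,
      abs_of_nonneg (rpow_nonneg hs.le _), abs_of_nonneg (rpow_nonneg (sub_nonneg.2 hsτ) _)]
  have hsummable : Summable fun k => ∫ s in Ioc 0 τ, ‖F k s‖ := by
    simp only [hnorm]
    exact (summable_pow_div_Gamma hα _ _).mul_left _
  rw [intervalIntegral.integral_of_le hτ.le, setIntegral_congr_fun measurableSet_Ioc hseries,
    ← integral_tsum_of_summable_integral_norm hint hsummable, mlE, ← tsum_mul_left]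
  exact tsum_congr (setIntegral_mlE_term (by linarith) hβ hq hτ m)

end FractionalIntegral

lemma rlIntegral_critical_eq_mlE_one {α : ℝ} (hα1 : 1 < α) (hα2 : α < 2) (m : ℝ) {τ : ℝ}
    (hτ : 0 < τ) :
    1 / Gamma (1 - (α - 1)) *
        ∫ s in (0 : ℝ)..τ, (τ - s) ^ (-(α - 1)) * (s ^ (α - 2) * mlE α (α - 1) (m * s ^ α))
      = mlE α 1 (m * τ ^ α) := by
  have h := integral_sub_rpow_mul_rpow_mul_mlE hα1 (by linarith : 0 < α - 1)
    (by linarith : 0 < 2 - α) hτ m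
  rw [show 2 - α - 1 = -(α - 1) by ring, show α - 1 - 1 = α - 2 by ring,
    show α - 1 + (2 - α) = 1 by ring, sub_self, rpow_zero, mul_one] at h
  rw [h, show 1 - (α - 1) = 2 - α by ring, ← mul_assoc, one_div,
    inv_mul_cancel₀ (Gamma_pos_of_pos (by linarith)).ne', one_mul]

lemma rlD_critical_eq_deriv {α : ℝ} (hα1 : 1 < α) (hα2 : α ≤ 2) (m : ℝ) {t : ℝ} (ht : 0 < t) :
    rlD (α - 1) (fun s => s ^ (α - 2) * mlE α (α - 1) (m * s ^ α)) t
      = deriv (fun τ => mlE α 1 (m * τ ^ α)) t := by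
  rcases hα2.lt_or_eq with hα2 | rfl
  · rw [rlD, if_neg (by linarith)]
    refine EventuallyEq.deriv_eq ?_
    filter_upwards [Ioi_mem_nhds ht] with τ hτ
    exact rlIntegral_critical_eq_mlE_one hα1 hα2 m hτ
  · norm_num [rlD]

/-- `D^{α−1}[t^{α−2}E_{α,α−1}(mt^α)](t) = m t^{α−1}E_{α,α}(mt^α)` for `t > 0`,
and this fractional derivative tends to `0` as `t → 0+`. -/
theorem rlD_critical_case (α m : ℝ) (hα1 : 1 < α) (hα2 : α ≤ 2) :
    (∀ t : ℝ, 0 < t →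
      rlD (α - 1) (fun s => s ^ (α - 2) * mlE α (α - 1) (m * s ^ α)) t
        = m * t ^ (α - 1) * mlE α α (m * t ^ α)) ∧
    Filter.Tendsto
      (fun t : ℝ => rlD (α - 1) (fun s => s ^ (α - 2) * mlE α (α - 1) (m * s ^ α)) t)
      (nhdsWithin 0 (Set.Ioi 0)) (nhds 0) := by
  have hD : ∀ t : ℝ, 0 < t →
      rlD (α - 1) (fun s => s ^ (α - 2) * mlE α (α - 1) (m * s ^ α)) t
        = m * t ^ (α - 1) * mlE α α (m * t ^ α) := fun t ht => by
    rw [rlD_critical_eq_deriv hα1 hα2 m ht, (hasDerivAt_mlE_one_comp_rpow hα1 m ht).deriv]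
  refine ⟨hD, Tendsto.congr' (eventually_nhdsWithin_of_forall fun t ht => (hD t ht).symm) ?_⟩
  have hcont : ContinuousAt (fun t : ℝ => m * t ^ (α - 1) * mlE α α (m * t ^ α)) 0 :=
    (continuousAt_const.mul (continuousAt_rpow_const _ _ (Or.inr (by linarith)))).mul
      ((continuous_mlE hα1 α).continuousAt.comp
        (continuousAt_const.mul (continuousAt_rpow_const _ _ (Or.inr (by linarith)))))
  simpa [zero_rpow (by linarith : α - 1 ≠ 0)] using hcont.tendsto.mono_left nhdsWithin_le_nhds
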